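/- Define, for $r \in [0, 1/2) \cup (1/2, 1/\sqrt{2})$, $D(r) = \frac{3\pi}{2} - \arctan\left(\frac{1 - 4r^2}{2\sqrt{2(1 - 2r^2)}}\right) - \frac{6\sqrt{2(1 - 2r^2)}}{3 - 4r^2}$. Then $D(r) \ge \frac{3\pi}{2} - \arctan\left(\frac{1}{2\sqrt{2}}\right) - 3 > 0$. -/
import Mathlib


open Real

noncomputable def D (r : ℝ) : ℝ :=
  3 * Real.pi / 2 - Real.arctan ((1 - 4 * r ^ 2) / (2 * Real.sqrt (2 * (1 - 2 * r ^ 2))))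
    - 6 * Real.sqrt (2 * (1 - 2 * r ^ 2)) / (3 - 4 * r ^ 2)

theorem stmt_12 (r : ℝ)
    (hr : r ∈ Set.Ico (0 : ℝ) (1 / 2) ∪ Set.Ioo (1 / 2 : ℝ) (1 / Real.sqrt 2)) :
    D r ≥ 3 * Real.pi / 2 - Real.arctan (1 / (2 * Real.sqrt 2)) - 3 ∧
    3 * Real.pi / 2 - Real.arctan (1 / (2 * Real.sqrt 2)) - 3 > 0 := by
  have hs2 : (0:ℝ) < Real.sqrt 2 := Real.sqrt_pos.mpr (by norm_num)
  have hs2sq : (Real.sqrt 2) ^ 2 = 2 := Real.sq_sqrt (by norm_num)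
  have hr2 : r ^ 2 < 1 / 2 := by
    rcases hr with ⟨h0, h1⟩ | ⟨h0, h1⟩
    · nlinarith
    · have h1' : r * Real.sqrt 2 < 1 := (lt_div_iff₀ hs2).mp h1
      nlinarith
  have h12 : (0:ℝ) < 1 - 2 * r ^ 2 := by linarith
  set t := Real.sqrt (1 - 2 * r ^ 2) with htdef
  have ht0 : 0 < t := Real.sqrt_pos.mpr h12
  have ht2 : t ^ 2 = 1 - 2 * r ^ 2 := Real.sq_sqrt h12.le
  have ht1 : t ≤ 1 := by
    rw [htdef]; exact Real.sqrt_le_one.mpr (by nlinarith [sq_nonneg r])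
  have hu : Real.sqrt (2 * (1 - 2 * r ^ 2)) = Real.sqrt 2 * t := by
    rw [htdef, Real.sqrt_mul (by norm_num : (0:ℝ) ≤ 2)]
  -- first term bound
  have harg : (1 - 4 * r ^ 2) / (2 * Real.sqrt (2 * (1 - 2 * r ^ 2))) ≤ 1 / (2 * Real.sqrt 2) := by
    rw [hu]
    rw [div_le_div_iff₀ (by positivity) (by positivity)]
    have hkey : 1 - 4 * r ^ 2 ≤ t := by nlinarith [sq_nonneg r]
    nlinarith
  have harctan : Real.arctan ((1 - 4 * r ^ 2) / (2 * Real.sqrt (2 * (1 - 2 * r ^ 2))))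
      ≤ Real.arctan (1 / (2 * Real.sqrt 2)) := Real.arctan_strictMono.monotone harg
  -- second term bound
  have hden : (0:ℝ) < 3 - 4 * r ^ 2 := by linarith
  have hterm2 : 6 * Real.sqrt (2 * (1 - 2 * r ^ 2)) / (3 - 4 * r ^ 2) ≤ 3 := by
    rw [div_le_iff₀ hden, hu]
    nlinarith [sq_nonneg (Real.sqrt 2 * t - 1)]
  have hpos : 3 * Real.pi / 2 - Real.arctan (1 / (2 * Real.sqrt 2)) - 3 > 0 := by
    have h1 := Real.arctan_lt_pi_div_two (1 / (2 * Real.sqrt 2))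
    have h2 := Real.pi_gt_three
    linarith
  refine ⟨?_, hpos⟩
  unfold D
  linarith
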